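/- Suppose φ, ψ : 𝓕 → 𝓔 are additive mappings such that ⟨φ(z), ψ(w)⟩ = 0 and a·⟨φ(z), φ(w)⟩·a* = (1−a)·⟨ψ(z), ψ(w)⟩·(1−a)* for all z, w ∈ 𝓕, and set 𝓚 := φ(𝓕) + ψ(𝓕) = {φ(x) + ψ(y) : x, y ∈ 𝓕}. If f : 𝓔 → 𝓖 is an odd orthogonally a-Jensen mapping (f(−x) = −f(x) for all x), then f is additive on 𝓚, i.e. f(z₁ + z₂) = f(z₁) + f(z₂) for all z₁, z₂ ∈ 𝓚. -/

import Mathlib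

/-! Since `f` is odd, `f 0 = 0`, and the Jensen identity with one argument `0` gives
`f x = f (x ⅟a) a`; applied to the orthogonal pair `(x ⅟a, y ⅟(1 - a))` it makes `f`
orthogonally additive.

For `u = φ z`, `v = φ w`, put `u' = ψ z c`, `v' = ψ w c` with `c = (1 - a)* (⅟a)*`: then
`{u, v} ⟂ {u', v'}` and the hypothesis on `φ, ψ` says exactly `⟪u, v⟫ = ⟪u', v'⟫`. Hence
`u + u' ⟂ v - v'` and `v + v' ⟂ u - u'`, and expanding `f` along the two decompositions
`(u + v) ± (u' - v')` and adding gives `2 f (u + v) = 2 (f u + f v)`. So `f` is additive on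
`φ(F)` and on `ψ(F)`, which are orthogonal to each other. -/

open scoped RightActions

/-- The Hilbert C⋆-module class as it was in Mathlib of December 2024: `E` carries a *right*
`A`-module structure (an `Aᵐᵒᵖ`-action) and the inner product satisfies
`⟪x, y <• a⟫ = ⟪x, y⟫ * a`. -/
class CStarModuleRight (A E : Type*) [NonUnitalSemiring A] [StarRing A] [Module ℂ A]
    [AddCommGroup E] [Module ℂ E] [PartialOrder A] [SMul Aᵐᵒᵖ E] [Norm A] [Norm E]
    extends Inner A E where
  inner_add_right {x} {y} {z} : inner x (y + z) = inner x y + inner x z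
  inner_self_nonneg {x} : 0 ≤ inner x x
  inner_self {x} : inner x x = 0 ↔ x = 0
  inner_op_smul_right {a : A} {x y : E} : inner x (y <• a) = inner x y * a
  inner_smul_right_complex {z : ℂ} {x} {y} : inner x (z • y) = z • inner x y
  star_inner x y : star (inner x y) = inner y x
  norm_eq_sqrt_norm_inner_self x : ‖x‖ = √‖inner x x‖

variable {A : Type*} [CStarAlgebra A] [PartialOrder A] [StarOrderedRing A]
variable {E : Type*} [NormedAddCommGroup E] [Module ℂ E] [Module Aᵐᵒᵖ E] [CStarModuleRight A E]
variable {F : Type*} [NormedAddCommGroup F] [Module ℂ F] [Module Aᵐᵒᵖ F] [CStarModuleRight A F]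
variable {G : Type*} [NormedAddCommGroup G] [Module ℂ G] [Module Aᵐᵒᵖ G] [CStarModuleRight A G]

/-- A mapping `f : E → G` between inner product `A`-modules is *orthogonally `a`-Jensen* if
`⟪x, y⟫ = 0` implies `f (a·x + (1-a)·y) = a·f x + (1-a)·f y` (module actions written as right
actions `<•`, since `E`, `G` are right `A`-modules). -/
def OrthAJensen (a : A) (f : E → G) : Prop :=
  ∀ x y : E, inner (𝕜 := A) x y = 0 →
    f (x <• a + y <• (1 - a)) = f x <• a + f y <• (1 - a)

open scoped InnerProductSpace

def OrthAdditive (R : Type*) {M N : Type*} [Zero R] [Inner R M] [Add M] [Add N] (f : M → N) :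
    Prop :=
  ∀ x y : M, ⟪x, y⟫_R = 0 → f (x + y) = f x + f y

namespace CStarModuleRight

section NonUnital

variable {R M : Type*} [NonUnitalRing R] [StarRing R] [Module ℂ R] [PartialOrder R]
  [AddCommGroup M] [Module ℂ M] [SMul Rᵐᵒᵖ M] [Norm R] [Norm M] [CStarModuleRight R M]

def innerAddMonoidHom (x : M) : M →+ R :=
  AddMonoidHom.mk' (inner R x) fun _ _ => inner_add_right

theorem inner_zero_right (x : M) : ⟪x, 0⟫_R = 0 := (innerAddMonoidHom x).map_zero

theorem inner_neg_right (x y : M) : ⟪x, -y⟫_R = -⟪x, y⟫_R :=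
  (innerAddMonoidHom (R := R) x).map_neg y

theorem inner_sub_right (x y z : M) : ⟪x, y - z⟫_R = ⟪x, y⟫_R - ⟪x, z⟫_R :=
  (innerAddMonoidHom (R := R) x).map_sub y z

theorem inner_zero_left (x : M) : ⟪0, x⟫_R = 0 := by
  rw [← star_inner, inner_zero_right, star_zero]

theorem inner_add_left (x y z : M) : ⟪x + y, z⟫_R = ⟪x, z⟫_R + ⟪y, z⟫_R := by
  rw [← star_inner, inner_add_right, star_add, star_inner, star_inner]

theorem inner_op_smul_left (a : R) (x y : M) : ⟪x <• a, y⟫_R = star a * ⟪x, y⟫_R := by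
  rw [← star_inner, inner_op_smul_right, star_mul, star_inner]

theorem inner_eq_zero_comm {x y : M} : ⟪x, y⟫_R = 0 ↔ ⟪y, x⟫_R = 0 := by
  rw [← star_inner, star_eq_zero]

variable {N : Type*} [AddCommGroup N] {f : M → N}

theorem _root_.OrthAdditive.map_sub (hf : OrthAdditive R f) (hodd : f.Odd) {x y : M}
    (hxy : ⟪x, y⟫_R = 0) : f (x - y) = f x - f y := by
  rw [sub_eq_add_neg, hf _ _ (by rw [inner_neg_right, hxy, neg_zero]), hodd, sub_eq_add_neg]

theorem _root_.OrthAdditive.map_add_add_map_sub (hf : OrthAdditive R f) (hodd : f.Odd)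
    {x y x' y' : M}
    (hxx' : ⟪x, x'⟫_R = 0) (hxy' : ⟪x, y'⟫_R = 0) (hyx' : ⟪y, x'⟫_R = 0) (hyy' : ⟪y, y'⟫_R = 0)
    (hxy : ⟪x, y⟫_R = ⟪x', y'⟫_R) :
    f (x + y) + f (x' - y') = f x + f x' + (f y - f y') := by
  have hx'y : ⟪x', y⟫_R = 0 := inner_eq_zero_comm.1 hyx'
  calc f (x + y) + f (x' - y') = f ((x + y) + (x' - y')) := by
        refine (hf _ _ ?_).symm
        rw [inner_add_left, inner_sub_right, inner_sub_right, hxx', hxy', hyx', hyy']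
        abel
    _ = f ((x + x') + (y - y')) := by congr 1; abel
    _ = f x + f x' + (f y - f y') := by
        have h : ⟪x + x', y - y'⟫_R = 0 := by
          rw [inner_add_left, inner_sub_right, inner_sub_right, hxy', hx'y, hxy]
          abel
        rw [hf _ _ h, hf _ _ hxx', hf.map_sub hodd hyy']

theorem _root_.OrthAdditive.map_add_of_inner_eq [IsAddTorsionFree N] (hf : OrthAdditive R f)
    (hodd : f.Odd) {x y x' y' : M}
    (hxx' : ⟪x, x'⟫_R = 0) (hxy' : ⟪x, y'⟫_R = 0) (hyx' : ⟪y, x'⟫_R = 0) (hyy' : ⟪y, y'⟫_R = 0)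
    (hxy : ⟪x, y⟫_R = ⟪x', y'⟫_R) : f (x + y) = f x + f y := by
  have h₁ := hf.map_add_add_map_sub hodd hxx' hxy' hyx' hyy' hxy
  have h₂ := hf.map_add_add_map_sub hodd hyy' hyx' hxy' hxx'
    (by rw [← star_inner, hxy, star_inner])
  rw [add_comm y x, ← neg_sub x' y', hodd] at h₂
  apply nsmul_right_injective two_ne_zero
  calc 2 • f (x + y) = (f (x + y) + f (x' - y')) + (f (x + y) + -f (x' - y')) := by abel
    _ = 2 • (f x + f y) := by rw [h₁, h₂]; abel

end NonUnital

theorem _root_.OrthAdditive.map_add_of_conj_inner_eq {R M N : Type*} [Ring R] [StarRing R]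
    [Module ℂ R] [PartialOrder R] [AddCommGroup M] [Module ℂ M] [SMul Rᵐᵒᵖ M] [Norm R] [Norm M]
    [CStarModuleRight R M] [AddCommGroup N] [IsAddTorsionFree N] {f : M → N}
    (hf : OrthAdditive R f) (hodd : f.Odd) (b d : R) [Invertible b] {x y x' y' : M}
    (hxx' : ⟪x, x'⟫_R = 0) (hxy' : ⟪x, y'⟫_R = 0) (hyx' : ⟪y, x'⟫_R = 0) (hyy' : ⟪y, y'⟫_R = 0)
    (hxy : b * ⟪x, y⟫_R * star b = d * ⟪x', y'⟫_R * star d) : f (x + y) = f x + f y := by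
  set c := star d * star ⅟b
  have hc : star c = ⅟b * d := by simp only [c, star_mul, star_star]
  refine hf.map_add_of_inner_eq hodd (x' := x' <• c) (y' := y' <• c) ?_ ?_ ?_ ?_ ?_
  · rw [inner_op_smul_right, hxx', zero_mul]
  · rw [inner_op_smul_right, hxy', zero_mul]
  · rw [inner_op_smul_right, hyx', zero_mul]
  · rw [inner_op_smul_right, hyy', zero_mul]
  · rw [inner_op_smul_right, inner_op_smul_left, hc]
    calc ⟪x, y⟫_R = ⅟b * b * ⟪x, y⟫_R * star (⅟b * b) := by
          rw [invOf_mul_self, star_one, one_mul, mul_one]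
      _ = ⅟b * (b * ⟪x, y⟫_R * star b) * star ⅟b := by simp only [star_mul, mul_assoc]
      _ = ⅟b * d * ⟪x', y'⟫_R * c := by rw [hxy]; simp only [c, mul_assoc]

theorem _root_.OrthAJensen.orthAdditive {R M N : Type*} [CStarAlgebra R] [PartialOrder R]
    [NormedAddCommGroup M] [Module ℂ M] [Module Rᵐᵒᵖ M] [CStarModuleRight R M]
    [NormedAddCommGroup N] [Module Rᵐᵒᵖ N] {a : R} [Invertible a] [Invertible (1 - a)]
    {f : M → N} (hf : OrthAJensen a f) (h0 : f 0 = 0) : OrthAdditive R f := by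
  have cancel (x : M) (c : R) [Invertible c] : x <• ⅟c <• c = x := by
    rw [op_smul_op_smul, invOf_mul_self, MulOpposite.op_one, one_smul]
  have hleft (x : M) : f x = f (x <• ⅟a) <• a := by
    simpa only [cancel, h0, smul_zero, add_zero] using hf (x <• ⅟a) 0 (inner_zero_right _)
  have hright (y : M) : f y = f (y <• ⅟(1 - a)) <• (1 - a) := by
    simpa only [cancel, h0, smul_zero, zero_add] using
      hf 0 (y <• ⅟(1 - a)) (inner_zero_left _)
  intro x y hxy
  have h := hf (x <• ⅟a) (y <• ⅟(1 - a)) (by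
    rw [inner_op_smul_left, inner_op_smul_right, hxy, zero_mul, mul_zero])
  rwa [cancel, cancel, ← hleft, ← hright] at h

end CStarModuleRight

theorem odd_additive_on_K_general (a : A) [Invertible a] [Invertible (1 - a)] (φ ψ : F → E)
    (horth : ∀ z w : F, inner (𝕜 := A) (φ z) (ψ w) = 0)
    (heq : ∀ z w : F,
      a * inner (𝕜 := A) (φ z) (φ w) * star a
        = (1 - a) * inner (𝕜 := A) (ψ z) (ψ w) * star (1 - a))
    (f : E → G) (hf : OrthAJensen a f) (hodd : ∀ x : E, f (-x) = -f x) :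
    ∀ z₁ z₂ : E, (∃ x y : F, z₁ = φ x + ψ y) → (∃ x y : F, z₂ = φ x + ψ y) →
      f (z₁ + z₂) = f z₁ + f z₂ := by
  have : IsAddTorsionFree G := .of_isTorsionFree ℂ G
  have hadd : OrthAdditive A f := hf.orthAdditive (Function.Odd.map_zero hodd)
  have horth' (z w : F) : ⟪ψ z, φ w⟫_A = 0 := CStarModuleRight.inner_eq_zero_comm.1 (horth w z)
  have hfφ (z w : F) : f (φ z + φ w) = f (φ z) + f (φ w) :=
    hadd.map_add_of_conj_inner_eq hodd a (1 - a) (horth z z) (horth z w) (horth w z) (horth w w)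
      (heq z w)
  have hfψ (z w : F) : f (ψ z + ψ w) = f (ψ z) + f (ψ w) :=
    hadd.map_add_of_conj_inner_eq hodd (1 - a) a (horth' z z) (horth' z w) (horth' w z)
      (horth' w w) (heq z w).symm
  rintro _ _ ⟨x₁, y₁, rfl⟩ ⟨x₂, y₂, rfl⟩
  have hK : ⟪φ x₁ + φ x₂, ψ y₁ + ψ y₂⟫_A = 0 := by
    simp only [CStarModuleRight.inner_add_left, CStarModuleRight.inner_add_right, horth,
      add_zero]
  calc f (φ x₁ + ψ y₁ + (φ x₂ + ψ y₂)) = f ((φ x₁ + φ x₂) + (ψ y₁ + ψ y₂)) := by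
        congr 1; abel
    _ = f (φ x₁ + ψ y₁) + f (φ x₂ + ψ y₂) := by
        rw [hadd _ _ hK, hfφ, hfψ, hadd _ _ (horth x₁ y₁), hadd _ _ (horth x₂ y₂)]
        abel

/-- Proposition 2.4: an odd orthogonally `a`-Jensen mapping is additive on
`K = φ(F) + ψ(F)`. -/
theorem odd_additive_on_K (a : A) [Invertible a] [Invertible (1 - a)] (φ ψ : F → E)
    (hφ : ∀ z w : F, φ (z + w) = φ z + φ w)
    (hψ : ∀ z w : F, ψ (z + w) = ψ z + ψ w)
    (horth : ∀ z w : F, inner (𝕜 := A) (φ z) (ψ w) = 0)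
    (heq : ∀ z w : F,
      a * inner (𝕜 := A) (φ z) (φ w) * star a
        = (1 - a) * inner (𝕜 := A) (ψ z) (ψ w) * star (1 - a))
    (f : E → G) (hf : OrthAJensen a f) (hodd : ∀ x : E, f (-x) = -f x) :
    ∀ z₁ z₂ : E, (∃ x y : F, z₁ = φ x + ψ y) → (∃ x y : F, z₂ = φ x + ψ y) →
      f (z₁ + z₂) = f z₁ + f z₂ :=
  odd_additive_on_K_general a φ ψ horth heq f hf hodd
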